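/- If t[x:=u] is strongly normalizing with respect to the union of the rules β, δ, γ, assoc, then t is strongly normalizing, and the length η(t) of the longest reduction from t is at most η(t[x:=u]). -/

import Mathlib

/-- Untyped λ-terms in de Bruijn representation. -/
inductive Term : Type
  | var : ℕ → Term
  | lam : Term → Term
  | app : Term → Term → Term
  deriving DecidableEq

namespace Term

/-- Shift (lift) all de Bruijn indices ≥ d by one. -/
def lift (d : ℕ) : Term → Term
  | var n => var (if n < d then n else n + 1)
  | lam t => lam (lift (d + 1) t)
  | app t u => app (lift d t) (lift d u)

/-- Capture-avoiding substitution `t[k := u]` (de Bruijn style). -/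
def subst : Term → ℕ → Term → Term
  | var n, k, u => if n = k then u else var (if n < k then n else n - 1)
  | lam t, k, u => lam (subst t (k + 1) (lift 0 u))
  | app t v, k, u => app (subst t k u) (subst v k u)

/-- Swap the de Bruijn indices d and d+1 (exchange of two adjacent binders). -/
def swap (d : ℕ) : Term → Term
  | var n => var (if n = d then d + 1 else if n = d + 1 then d else n)
  | lam t => lam (swap (d + 1) t)
  | app t u => app (swap d t) (swap d u)

end Term

/-- The four reduction rules. -/
inductive Rule | beta | delta | gamma | assoc

/-- One-step reduction by a given rule (closed under congruence).
β: (λx.M N) ▷ M[x:=N];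
δ: (λy.λx.M N) ▷ λx.(λy.M N), x ∉ FV(N);
γ: (λx.M N P) ▷ (λx.(M P) N), x ∉ FV(P);
assoc: (M (λx.N P)) ▷ (λx.(M N) P), x ∉ FV(M).
Freshness conditions are realized by lifting. -/
inductive Step : Rule → Term → Term → Prop
  | beta (M N) : Step .beta (.app (.lam M) N) (Term.subst M 0 N)
  | delta (M N) : Step .delta (.app (.lam (.lam M)) N)
      (.lam (.app (.lam (Term.swap 0 M)) (Term.lift 0 N)))
  | gamma (M N P) : Step .gamma (.app (.app (.lam M) N) P)
      (.app (.lam (.app M (Term.lift 0 P))) N)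
  | assoc (M N P) : Step .assoc (.app M (.app (.lam N) P))
      (.app (.lam (.app (Term.lift 0 M) N)) P)
  | appCongL {r t t'} (u) : Step r t t' → Step r (.app t u) (.app t' u)
  | appCongR {r u u'} (t) : Step r u u' → Step r (.app t u) (.app t u')
  | lamCong {r t t'} : Step r t t' → Step r (.lam t) (.lam t')

/-- One-step reduction by the union of the four rules. -/
def StepAll (t t' : Term) : Prop := ∃ r, Step r t t'

/-- Strong normalization for the union of β, δ, γ, assoc. -/
def SN (t : Term) : Prop := Acc (fun a b => StepAll b a) t

/-- Strong normalization for β alone. -/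
def SNbeta (t : Term) : Prop := Acc (fun a b => Step .beta b a) t

mutual
/-- Simple types: atoms and arrows with simple codomain. -/
inductive STy : Type
  | atom : ℕ → STy
  | arrow : Ty → STy → STy
/-- Types of system D: intersections of simple types. -/
inductive Ty : Type
  | simple : STy → Ty
  | inter : STy → Ty → Ty
end

/-- Typing judgment of system D (contexts are lists of types, de Bruijn). -/
inductive Typing : List Ty → Term → Ty → Prop
  | var {Γ n A} : Γ[n]? = some A → Typing Γ (.var n) A
  | app {Γ M N A B} : Typing Γ M (.simple (.arrow A B)) → Typing Γ N A →
      Typing Γ (.app M N) (.simple B)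
  | lam {Γ M A B} : Typing (A :: Γ) M (.simple B) →
      Typing Γ (.lam M) (.simple (.arrow A B))
  | interI {Γ M A B} : Typing Γ M (.simple A) → Typing Γ M B →
      Typing Γ M (.inter A B)
  | interE1 {Γ M A B} : Typing Γ M (.inter A B) → Typing Γ M (.simple A)
  | interE2 {Γ M A B} : Typing Γ M (.inter A B) → Typing Γ M B

/-- A term is typable in system D. -/
def Typable (t : Term) : Prop := ∃ Γ A, Typing Γ t A

/-- (H M₁ ... Mₙ). -/
def appList (H : Term) (Ms : List Term) : Term := Ms.foldl .app H

/-- Reduction sequences of a given length. -/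
inductive Chain : Term → ℕ → Prop
  | zero (t) : Chain t 0
  | succ {t t' n} : StepAll t t' → Chain t' n → Chain t (n + 1)

/-- η(t): the length of the longest reduction sequence from t. -/
noncomputable def eta (t : Term) : ℕ := sSup {n | Chain t n}

/-! A step `t ▷ t'` by any of the four rules gives `t[k:=u] ▷ t'[k:=u]` by the same rule: for β
this is the substitution lemma, for δ, γ and assoc it is the commutation of substitution with the
lifting and swapping that encode the freshness conditions. So substitution maps reduction sequences
from `t` to sequences of the same length from `t[k:=u]`, which gives strong normalization of `t`.
Reduction is finitely branching, so the lengths of reductions from an SN term are bounded and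
`eta` is a true maximum, not the junk value `0` that `sSup` assigns to an unbounded set; the
inequality follows. -/

namespace Term

theorem lift_lift {i j : ℕ} (t : Term) (hij : i ≤ j) :
    lift i (lift j t) = lift (j + 1) (lift i t) := by
  induction t generalizing i j with
  | var n => grind [lift]
  | lam t ih => simp only [lift, ih (Nat.succ_le_succ hij)]
  | app t v iht ihv => simp only [lift, iht hij, ihv hij]

theorem subst_lift (t : Term) (k : ℕ) (u : Term) : subst (lift k t) k u = t := by
  induction t generalizing k u with
  | var n => grind [lift, subst]
  | lam t ih => simp only [lift, subst, ih]
  | app t v iht ihv => simp only [lift, subst, iht, ihv]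

theorem lift_subst {j k : ℕ} (t u : Term) (hjk : j ≤ k) :
    lift j (subst t k u) = subst (lift j t) (k + 1) (lift j u) := by
  induction t generalizing j k u with
  | var n => grind [lift, subst]
  | lam t ih =>
      simp only [lift, subst, ih _ (Nat.succ_le_succ hjk), lift_lift u (Nat.zero_le j)]
  | app t v iht ihv => simp only [lift, subst, iht _ hjk, ihv _ hjk]

theorem subst_subst {j k : ℕ} (t N u : Term) (hjk : j ≤ k) :
    subst (subst t j N) k u = subst (subst t (k + 1) (lift j u)) j (subst N k u) := by
  induction t generalizing j k N u with
  | var n => grind [subst, subst_lift]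
  | lam t ih =>
      simp only [subst, ih _ _ (Nat.succ_le_succ hjk), lift_lift u (Nat.zero_le j),
        lift_subst N u (Nat.zero_le k)]
  | app t v iht ihv => simp only [subst, iht _ _ hjk, ihv _ _ hjk]

theorem lift_swap {j d : ℕ} (t : Term) (hjd : j ≤ d) :
    lift j (swap d t) = swap (d + 1) (lift j t) := by
  induction t generalizing j d with
  | var n => grind [lift, swap]
  | lam t ih => simp only [lift, swap, ih (Nat.succ_le_succ hjd)]
  | app t v iht ihv => simp only [lift, swap, iht hjd, ihv hjd]

theorem swap_lift_lift (t : Term) (d : ℕ) : swap d (lift d (lift d t)) = lift d (lift d t) := by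
  induction t generalizing d with
  | var n => grind [lift, swap]
  | lam t ih => simp only [lift, swap, ih]
  | app t v iht ihv => simp only [lift, swap, iht, ihv]

theorem swap_subst {d k : ℕ} (t u : Term) (hdk : d + 1 < k) :
    swap d (subst t k u) = subst (swap d t) k (swap d u) := by
  induction t generalizing d k u with
  | var n => grind [subst, swap]
  | lam t ih =>
      simp only [subst, swap, ih _ (Nat.succ_lt_succ hdk), lift_swap u (Nat.zero_le d)]
  | app t v iht ihv => simp only [subst, swap, iht _ hdk, ihv _ hdk]

end Term

theorem Step.subst {r : Rule} {t t' : Term} (h : Step r t t') (k : ℕ) (u : Term) :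
    Step r (t.subst k u) (t'.subst k u) := by
  induction h generalizing k u with
  | beta M N => rw [Term.subst_subst M N u (Nat.zero_le k)]; exact .beta _ _
  | delta M N =>
      have hM : (Term.swap 0 M).subst (k + 2) (Term.lift 0 (Term.lift 0 u)) =
          Term.swap 0 (M.subst (k + 2) (Term.lift 0 (Term.lift 0 u))) := by
        rw [Term.swap_subst M _ (by omega), Term.swap_lift_lift]
      simp only [Term.subst]
      rw [hM, ← Term.lift_subst N u (Nat.zero_le k)]
      exact .delta _ _
  | gamma M N P =>
      simp only [Term.subst]
      rw [← Term.lift_subst P u (Nat.zero_le k)]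
      exact .gamma _ _ _
  | assoc M N P =>
      simp only [Term.subst]
      rw [← Term.lift_subst M u (Nat.zero_le k)]
      exact .assoc _ _ _
  | appCongL _ _ ih => exact .appCongL _ (ih k u)
  | appCongR _ _ ih => exact .appCongR _ (ih k u)
  | lamCong _ ih => exact .lamCong (ih (k + 1) (Term.lift 0 u))

def reducts : Term → List Term
  | .var _ => []
  | .lam t => (reducts t).map .lam
  | .app t u =>
      (match t with | .lam M => [Term.subst M 0 u] | _ => []) ++
      (match t with
        | .lam (.lam M) => [Term.lam (.app (.lam (Term.swap 0 M)) (Term.lift 0 u))]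
        | _ => []) ++
      (match t with
        | .app (.lam M) N => [Term.app (.lam (.app M (Term.lift 0 u))) N]
        | _ => []) ++
      (match u with
        | .app (.lam N) P => [Term.app (.lam (.app (Term.lift 0 t) N)) P]
        | _ => []) ++
      (reducts t).map (fun t' => Term.app t' u) ++
      (reducts u).map (fun u' => Term.app t u')

theorem mem_reducts_of_stepAll {t t' : Term} (h : StepAll t t') : t' ∈ reducts t := by
  obtain ⟨r, h⟩ := h
  induction h with
  | beta | delta | gamma | assoc => simp [reducts]
  | appCongL | appCongR | lamCong => simp [reducts, *]

theorem SN.bddAbove_chain {t : Term} (h : SN t) : BddAbove {n | Chain t n} := by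
  induction h with
  | intro t _ ih =>
    refine ⟨((reducts t).map eta).sum + 1, ?_⟩
    rintro _ (_ | ⟨hstep, hchain⟩)
    · exact Nat.zero_le _
    · have h_eta : _ ≤ eta _ := le_csSup (ih _ hstep) hchain
      have h_sum : eta _ ≤ ((reducts t).map eta).sum :=
        List.single_le_sum (fun _ _ => Nat.zero_le _) _
          (List.mem_map_of_mem (mem_reducts_of_stepAll hstep))
      exact Nat.succ_le_succ (h_eta.trans h_sum)

section Simulation

variable {f : Term → Term}

theorem SN.of_simulation (hf : ∀ {a b}, StepAll a b → StepAll (f a) (f b))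
    {t : Term} (h : SN (f t)) : SN t :=
  Subrelation.accessible hf (InvImage.accessible f h)

theorem Chain.simulation (hf : ∀ {a b}, StepAll a b → StepAll (f a) (f b))
    {t : Term} {n : ℕ} (h : Chain t n) : Chain (f t) n := by
  induction h with
  | zero => exact .zero _
  | succ hstep _ ih => exact .succ (hf hstep) ih

theorem eta_le_of_simulation (hf : ∀ {a b}, StepAll a b → StepAll (f a) (f b))
    {t : Term} (h : SN (f t)) : eta t ≤ eta (f t) :=
  csSup_le_csSup h.bddAbove_chain ⟨0, .zero t⟩ fun _ hn => hn.simulation hf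

end Simulation

/-- If t[x:=u] is SN then t is SN and η(t) ≤ η(t[x:=u]). -/
theorem sn_of_subst (t u : Term) (k : ℕ) (h : SN (Term.subst t k u)) :
    SN t ∧ eta t ≤ eta (Term.subst t k u) := by
  have hsim : ∀ {a b}, StepAll a b → StepAll (a.subst k u) (b.subst k u) :=
    fun ⟨r, hab⟩ => ⟨r, hab.subst k u⟩
  exact ⟨SN.of_simulation hsim h, eta_le_of_simulation hsim h⟩
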